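/- Let m ≥ 1 and δ((z,t),(ζ,τ)) = |z−ζ| + min{|v|^{1/(2m+2)}, |v|^{1/2}/|z|^m} with v = τ − t + |z|^{2m}(xη − yξ). Then for points on the graph of an m-admissible function φ (with v = φ(ζ) − φ(z) + |z|^{2m}(xη−yξ) and |ζ| ≤ |z|), one has |v|^{1/2}/|z|^m ≤ C ( |ζ − z| + |v|^{1/(2m+2)} ) for a constant C depending only on m and the admissibility constant of φ. -/

import Mathlib

open MeasureTheory Set

noncomputable section

/-- Euclidean norm on ℝ². -/
def nrm (z : ℝ × ℝ) : ℝ := Real.sqrt (z.1 ^ 2 + z.2 ^ 2)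

/-- `|z|^(2m)` for a real parameter `m`. -/
def w2m (m : ℝ) (z : ℝ × ℝ) : ℝ := (z.1 ^ 2 + z.2 ^ 2) ^ m
/-- `φ` is `m`-admissible with constant `C`:
`|D³φ(z)| ≤ C|z|^(2m−1)`, `|D²φ(z)| ≤ C|z|^(2m)`, `|Dφ(z)| ≤ C|z|^(2m+1)`. -/
def Admissible (m C : ℝ) (φ : ℝ × ℝ → ℝ) : Prop :=
  ContDiff ℝ (⊤ : ℕ∞) φ ∧
  (∀ z, ‖iteratedFDeriv ℝ 1 φ z‖ ≤ C * nrm z ^ (2 * m + 1)) ∧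
  (∀ z, ‖iteratedFDeriv ℝ 2 φ z‖ ≤ C * nrm z ^ (2 * m)) ∧
  (∀ z, ‖iteratedFDeriv ℝ 3 φ z‖ ≤ C * nrm z ^ (2 * m - 1))

/-- `φ_x`. -/
def phx (φ : ℝ × ℝ → ℝ) (z : ℝ × ℝ) : ℝ := fderiv ℝ φ z (1, 0)

/-- `φ_y`. -/
def phy (φ : ℝ × ℝ → ℝ) (z : ℝ × ℝ) : ℝ := fderiv ℝ φ z (0, 1)

/-- `XF(z) = φ_x(z) − |z|^(2m) y` for `F(z,t) = φ(z) − t`. -/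
def ZFx (m : ℝ) (φ : ℝ × ℝ → ℝ) (z : ℝ × ℝ) : ℝ := phx φ z - w2m m z * z.2

/-- `YF(z) = φ_y(z) + |z|^(2m) x` for `F(z,t) = φ(z) − t`. -/
def ZFy (m : ℝ) (φ : ℝ × ℝ → ℝ) (z : ℝ × ℝ) : ℝ := phy φ z + w2m m z * z.1

/-- `|ZF(z)|`. -/
def ZFnorm (m : ℝ) (φ : ℝ × ℝ → ℝ) (z : ℝ × ℝ) : ℝ :=
  Real.sqrt (ZFx m φ z ^ 2 + ZFy m φ z ^ 2)

lemma nrm_nonneg (p : ℝ × ℝ) : 0 ≤ nrm p := Real.sqrt_nonneg _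

lemma cs2 (a b c d : ℝ) : a*c + b*d ≤ Real.sqrt (a^2+b^2) * Real.sqrt (c^2+d^2) := by
  rw [← Real.sqrt_mul (by positivity)]
  rcases le_total (a*c + b*d) 0 with h | h
  · exact h.trans (Real.sqrt_nonneg _)
  · rw [Real.le_sqrt h (by positivity)]
    nlinarith [sq_nonneg (a*d - b*c)]

lemma csdet (a b c d : ℝ) : |a*d - b*c| ≤ Real.sqrt (a^2+b^2) * Real.sqrt (c^2+d^2) := by
  rw [← Real.sqrt_mul (by positivity)]
  rw [Real.le_sqrt (abs_nonneg _) (by positivity), sq_abs]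
  nlinarith [sq_nonneg (a*c + b*d)]

lemma nrm_add_le (p q : ℝ × ℝ) : nrm (p+q) ≤ nrm p + nrm q := by
  unfold nrm
  have h : (p.1+q.1)^2 + (p.2+q.2)^2 ≤
      (Real.sqrt (p.1^2+p.2^2) + Real.sqrt (q.1^2+q.2^2))^2 := by
    have h1 := cs2 p.1 p.2 q.1 q.2
    have h2 := Real.sq_sqrt (show (0:ℝ) ≤ p.1^2+p.2^2 by positivity)
    have h3 := Real.sq_sqrt (show (0:ℝ) ≤ q.1^2+q.2^2 by positivity)
    nlinarith
  calc Real.sqrt ((p+q).1^2 + (p+q).2^2)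
      = Real.sqrt ((p.1+q.1)^2 + (p.2+q.2)^2) := by rfl
    _ ≤ Real.sqrt ((Real.sqrt (p.1^2+p.2^2) + Real.sqrt (q.1^2+q.2^2))^2) :=
        Real.sqrt_le_sqrt h
    _ = _ := Real.sqrt_sq (by positivity)

lemma nrm_smul (a : ℝ) (p : ℝ × ℝ) : nrm (a • p) = |a| * nrm p := by
  unfold nrm
  have : (a • p).1 ^ 2 + (a • p).2 ^ 2 = a^2 * (p.1^2 + p.2^2) := by
    simp [Prod.smul_fst, Prod.smul_snd, smul_eq_mul]; ring
  rw [this, Real.sqrt_mul (sq_nonneg a), Real.sqrt_sq_eq_abs]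

lemma nrm_segment {ζ z w : ℝ × ℝ} (hw : w ∈ segment ℝ ζ z) (h : nrm ζ ≤ nrm z) :
    nrm w ≤ nrm z := by
  obtain ⟨a, b, ha, hb, hab, rfl⟩ := hw
  calc nrm (a • ζ + b • z) ≤ nrm (a • ζ) + nrm (b • z) := nrm_add_le _ _
    _ = a * nrm ζ + b * nrm z := by rw [nrm_smul, nrm_smul, abs_of_nonneg ha, abs_of_nonneg hb]
    _ ≤ a * nrm z + b * nrm z := by nlinarith [nrm_nonneg ζ, nrm_nonneg z]
    _ = nrm z := by rw [← add_mul, hab, one_mul]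

lemma sup_le_nrm (p : ℝ × ℝ) : ‖p‖ ≤ nrm p := by
  rw [Prod.norm_def, sup_le_iff]
  constructor <;> rw [Real.norm_eq_abs, ← Real.sqrt_sq_eq_abs] <;>
    exact Real.sqrt_le_sqrt (by nlinarith [sq_nonneg p.1, sq_nonneg p.2])

lemma key (m C' R d A : ℝ) (hm : 1 ≤ m) (hC : 1 ≤ C') (hR : 0 ≤ R) (hd : 0 ≤ d)
    (hA : 0 ≤ A) (hbound : A ≤ C' * R ^ (2*m+1) * d) :
    A ^ ((1:ℝ)/2) / R ^ m ≤ C' * (d + A ^ (1/(2*m+2))) := by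
  have hp : (0:ℝ) < 2*m+2 := by linarith
  rcases eq_or_lt_of_le hA with h0 | hApos
  · rw [← h0, Real.zero_rpow (by norm_num), Real.zero_rpow (by positivity), zero_div]
    positivity
  · have hRpos : 0 < R := by
      rcases eq_or_lt_of_le hR with h | h
      · exfalso
        rw [← h, Real.zero_rpow (by positivity)] at hbound
        nlinarith
      · exact h
    have hRm : (0:ℝ) < R ^ m := Real.rpow_pos_of_pos hRpos _
    have hArp : (0:ℝ) ≤ A ^ (1/(2*m+2)) := Real.rpow_nonneg hA _
    rcases le_or_gt A (R ^ (2*m+2)) with hle | hgt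
    · have e1 : A ^ ((1:ℝ)/2) = A ^ (1/(2*m+2)) * A ^ (m/(2*m+2)) := by
        rw [← Real.rpow_add hApos]
        congr 1
        field_simp
        ring
      have e2 : A ^ (m/(2*m+2)) ≤ R ^ m := by
        calc A ^ (m/(2*m+2)) ≤ (R ^ (2*m+2)) ^ (m/(2*m+2)) :=
              Real.rpow_le_rpow hA hle (by positivity)
          _ = R ^ m := by
              rw [← Real.rpow_mul hR]
              congr 1
              field_simp
      have h1 : A ^ ((1:ℝ)/2) / R ^ m ≤ A ^ (1/(2*m+2)) := by
        rw [div_le_iff₀ hRm, e1]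
        exact mul_le_mul_of_nonneg_left e2 hArp
      nlinarith
    · have hRp : (0:ℝ) < R ^ (2*m+1) := Real.rpow_pos_of_pos hRpos _
      have hR1 : R ^ (2*m+2) = R ^ (2*m+1) * R := by
        rw [← Real.rpow_add_one (ne_of_gt hRpos)]
        ring_nf
      have hRd : R < C' * d := by
        have h1 : R ^ (2*m+1) * R < C' * R ^ (2*m+1) * d := by
          rw [← hR1]; linarith
        nlinarith
      have hm3 : R ^ (2*m+1) = R ^ m * R ^ m * R := by
        rw [← Real.rpow_add hRpos, ← Real.rpow_add_one (ne_of_gt hRpos)]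
        ring_nf
      have hY : (0:ℝ) ≤ C' * d * R ^ m := by positivity
      have hsq : A ≤ (C' * d * R ^ m)^2 := by
        calc A ≤ C' * R ^ (2*m+1) * d := hbound
          _ = C' * (R ^ m * R ^ m) * R * d := by rw [hm3]; ring
          _ ≤ C' * (R ^ m * R ^ m) * (C' * d) * d := by
              have := mul_pos hRm hRm
              gcongr
          _ = (C' * d * R ^ m)^2 := by ring
      have goal1 : A ^ ((1:ℝ)/2) ≤ C' * d * R ^ m := by
        calc A ^ ((1:ℝ)/2) ≤ ((C' * d * R ^ m)^2) ^ ((1:ℝ)/2) :=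
              Real.rpow_le_rpow hA hsq (by norm_num)
          _ = C' * d * R ^ m := by
              rw [← Real.rpow_natCast (C' * d * R ^ m) 2, ← Real.rpow_mul hY]
              norm_num
      have h1 : A ^ ((1:ℝ)/2) / R ^ m ≤ C' * d := by
        rw [div_le_iff₀ hRm]
        exact goal1
      nlinarith

/-- On the graph of an `m`-admissible function, with
`v = φ(ζ) − φ(z) + |z|^(2m)(xη − yξ)` and `|ζ| ≤ |z|`:
`|v|^(1/2)/|z|^m ≤ C (|ζ − z| + |v|^(1/(2m+2)))`. -/
theorem stmt19 (m Ca : ℝ) (hm : 1 ≤ m) (hCa : 0 < Ca) :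
    ∃ C : ℝ, 0 < C ∧ ∀ φ : ℝ × ℝ → ℝ, Admissible m Ca φ →
      ∀ z ζ : ℝ × ℝ, nrm ζ ≤ nrm z →
        |φ ζ - φ z + w2m m z * (z.1 * ζ.2 - z.2 * ζ.1)| ^ ((1 : ℝ) / 2) / nrm z ^ m ≤
          C * (nrm (ζ - z) +
            |φ ζ - φ z + w2m m z * (z.1 * ζ.2 - z.2 * ζ.1)| ^ (1 / (2 * m + 2))) := by
  refine ⟨Ca + 1, by linarith, ?_⟩
  intro φ hφ z ζ hzζ
  obtain ⟨hsm, hd1, -, -⟩ := hφ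
  have hRnn : 0 ≤ nrm z := nrm_nonneg z
  have hdnn : 0 ≤ nrm (ζ - z) := nrm_nonneg _
  have hp : (0:ℝ) < 2*m+2 := by linarith
  rcases eq_or_lt_of_le hRnn with hR0 | hRpos
  · -- nrm z = 0 : z = 0 and ζ = 0
    have hz : z.1 = 0 ∧ z.2 = 0 := by
      have := (Real.sqrt_eq_zero (by positivity)).mp hR0.symm
      constructor <;> nlinarith [sq_nonneg z.1, sq_nonneg z.2]
    have hζn : nrm ζ = 0 := le_antisymm (hR0 ▸ hzζ) (nrm_nonneg ζ)
    have hζ : ζ.1 = 0 ∧ ζ.2 = 0 := by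
      have := (Real.sqrt_eq_zero (by positivity)).mp hζn
      constructor <;> nlinarith [sq_nonneg ζ.1, sq_nonneg ζ.2]
    have hzeq : ζ = z := by
      ext
      · rw [hζ.1, hz.1]
      · rw [hζ.2, hz.2]
    have hv : φ ζ - φ z + w2m m z * (z.1 * ζ.2 - z.2 * ζ.1) = 0 := by
      rw [hzeq, hz.1, hz.2]; ring
    rw [hv, abs_zero, Real.zero_rpow (by norm_num), zero_div,
      Real.zero_rpow (by positivity)]
    positivity
  · -- main case nrm z > 0
    set R := nrm z with hR
    set d := nrm (ζ - z) with hd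
    set v := φ ζ - φ z + w2m m z * (z.1 * ζ.2 - z.2 * ζ.1) with hv
    -- MVT bound on φ ζ - φ z
    have hM : ∀ w ∈ segment ℝ ζ z, ‖fderiv ℝ φ w‖ ≤ Ca * R ^ (2*m+1) := by
      intro w hw
      have h1 : ‖fderiv ℝ φ w‖ = ‖iteratedFDeriv ℝ 1 φ w‖ := by
        calc ‖fderiv ℝ φ w‖ = ‖iteratedFDeriv ℝ 0 (fderiv ℝ φ) w‖ :=
              (norm_iteratedFDeriv_zero).symm
          _ = ‖iteratedFDeriv ℝ 1 φ w‖ := norm_iteratedFDeriv_fderiv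
      rw [h1]
      refine (hd1 w).trans ?_
      have : nrm w ^ (2*m+1) ≤ R ^ (2*m+1) :=
        Real.rpow_le_rpow (nrm_nonneg w) (nrm_segment hw hzζ) (by linarith)
      nlinarith
    have hmvt : ‖φ ζ - φ z‖ ≤ Ca * R ^ (2*m+1) * ‖ζ - z‖ :=
      Convex.norm_image_sub_le_of_norm_fderiv_le
        (fun x _ => (hsm.differentiable (by simp)).differentiableAt) hM
        (convex_segment _ _) (right_mem_segment ℝ ζ z) (left_mem_segment ℝ ζ z)
    have h1 : |φ ζ - φ z| ≤ Ca * R ^ (2*m+1) * d := by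
      refine hmvt.trans ?_
      have h2 := sup_le_nrm (ζ - z)
      have h3 : (0:ℝ) ≤ Ca * R ^ (2*m+1) := by positivity
      have h4 : ‖ζ - z‖ ≤ d := hd ▸ h2
      nlinarith
    -- the rotation term
    have hw2m : w2m m z = R ^ (2*m) := by
      rw [hR]
      unfold w2m nrm
      rw [Real.sqrt_eq_rpow, ← Real.rpow_mul (by positivity)]
      congr 1
      ring
    have hdet : |z.1 * ζ.2 - z.2 * ζ.1| ≤ R * d := by
      have he : z.1 * ζ.2 - z.2 * ζ.1 = z.1 * (ζ.2 - z.2) - z.2 * (ζ.1 - z.1) := by ring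
      rw [he]
      have := csdet z.1 z.2 (ζ.1 - z.1) (ζ.2 - z.2)
      have hde : d = Real.sqrt ((ζ.1 - z.1)^2 + (ζ.2 - z.2)^2) := by
        rw [hd]; rfl
      rw [hR, hde]
      exact this
    have hRp2m : (0:ℝ) ≤ R ^ (2*m) := Real.rpow_nonneg hRnn _
    have h2 : |w2m m z * (z.1 * ζ.2 - z.2 * ζ.1)| ≤ R ^ (2*m) * (R * d) := by
      rw [abs_mul, hw2m, abs_of_nonneg hRp2m]
      exact mul_le_mul_of_nonneg_left hdet hRp2m
    have hRR : R ^ (2*m) * R = R ^ (2*m+1) := by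
      rw [Real.rpow_add_one (ne_of_gt hRpos)]
    have hbound : |v| ≤ (Ca + 1) * R ^ (2*m+1) * d := by
      calc |v| ≤ |φ ζ - φ z| + |w2m m z * (z.1 * ζ.2 - z.2 * ζ.1)| := abs_add_le _ _
        _ ≤ Ca * R ^ (2*m+1) * d + R ^ (2*m) * (R * d) := add_le_add h1 h2
        _ = (Ca + 1) * R ^ (2*m+1) * d := by rw [← hRR]; ring
    exact key m (Ca + 1) R d |v| hm (by linarith) hRnn hdnn (abs_nonneg _) hbound
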